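/- arXiv:1607.00138 — 7 statements merged into one kernel-verified Lean document; each statement's English description precedes it below -/
import Mathlib

section
/- Let f : Σ^m → ℕ be a cost function and g : Σ^m → {1,…,m} a shift function, and let D be the DAA encoding (f,g) with start window S. Then for every n ≥ 0 and every text T ∈ Σ^n, value_D(T) equals the total cost of the window-based pattern matching algorithm specified by (f,g) on T. -/
/-- The longest suffix of `a` satisfying `p` (default `[]` if no suffix satisfies `p`). -/
def longestSuffixP {A : Type*} (p : List A → Prop) [DecidablePred p] (a : List A) : List A :=
  (a.tails.filter fun t => decide (p t)).headD []

/-- Run of a DAA with additive natural-number values: from a state/value pair,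
read the text character by character; on entering a state, add its emission. -/
def daaRun {A Q : Type*} (step : Q → A → Q) (emit : Q → ℕ) : Q × ℕ → List A → Q × ℕ
  | s, [] => s
  | (q, v), σ :: x => daaRun step emit (step q σ, v + emit (step q σ)) x

/-- Transition of the (full) DAA encoding a window-based algorithm with shift `g`:
states are pairs (window, count-down `k`); on reading `σ` in state `(w,k)` move to
`(w₁…w_{m-1}σ, k-1)` if `k > 0` and to `(w₁…w_{m-1}σ, g(w)-1)` if `k = 0`. -/
def fullStep {A : Type*} (g : List A → ℕ) : (List A × ℕ) → A → (List A × ℕ) :=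
  fun s σ => (s.1.tail ++ [σ], if 0 < s.2 then s.2 - 1 else g s.1 - 1)

/-- Emission of the (full) DAA encoding a window-based algorithm with cost `f`:
on entering `(w',k')`, add `f(w')` if `k' = 0` and `0` otherwise. -/
def fullEmit {A : Type*} (f : List A → ℕ) : (List A × ℕ) → ℕ :=
  fun s => if s.2 = 0 then f s.1 else 0

/-- `value_D(T)` for the DAA `D` encoding `(f,g)` with start state `(S,m)` and start value `0`. -/
def valueD {A : Type*} (f g : List A → ℕ) (S : List A) (m : ℕ) (T : List A) : ℕ :=
  (daaRun (fullStep g) (fullEmit f) ((S, m), 0) T).2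

/-- Total cost of the window-based algorithm `(f,g)` (auxiliary, fuelled version):
from window position `p`, as long as `p + m ≤ |T|`, pay `f` on the current window
`t_p … t_{p+m-1}` and shift by `g` of it. (Since shifts are ≥ 1, fuel `|T| + 1`
suffices to visit all window positions.) -/
def totalCostAux {A : Type*} (f g : List A → ℕ) (m : ℕ) (T : List A) : ℕ → ℕ → ℕ
  | 0, _ => 0
  | fuel + 1, p =>
    if p + m ≤ T.length then
      f ((T.drop p).take m) + totalCostAux f g m T fuel (p + g ((T.drop p).take m))
    else 0

/-- Total cost (number of text character accesses) of the window-based pattern matching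
algorithm specified by cost `f` and shift `g` on text `T` (window length `m`),
starting at window position `0`. -/
def totalCost {A : Type*} (f g : List A → ℕ) (m : ℕ) (T : List A) : ℕ :=
  totalCostAux f g m T (T.length + 1) 0

/-!
In a state `(u, k)` with `k > 0` the next window of the algorithm ends `k` characters after the
buffer `u`, i.e. it starts `k` positions into `u`; in a state `(u, 0)` the window `u` has just been
paid for and the next one starts `g u` positions into `u`. So, writing `d` for this pending shift,
the value still to be collected from `(u, k)` on the rest `R` of the text is the total cost of the
algorithm on `u.drop d ++ R`. At the start state `(S, m)` that text is `T` itself.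
-/

section
variable {A : Type*} (f g : List A → ℕ) (m : ℕ)

theorem totalCostAux_drop (T : List A) {s : ℕ} (hs : s ≤ T.length) (fuel p : ℕ) :
    totalCostAux f g m (T.drop s) fuel p = totalCostAux f g m T fuel (p + s) := by
  induction fuel generalizing p with
  | zero => rfl
  | succ fuel ih =>
    have hfit : p + m ≤ (T.drop s).length ↔ p + s + m ≤ T.length := by
      rw [List.length_drop]; omega
    simp only [totalCostAux, List.drop_drop, ih, hfit, Nat.add_comm s p, Nat.add_right_comm p s]

theorem totalCostAux_succ_fuel (hg : ∀ w : List A, w.length = m → 1 ≤ g w) (T : List A)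
    {fuel p : ℕ} (h : T.length < p + m + fuel) :
    totalCostAux f g m T (fuel + 1) p = totalCostAux f g m T fuel p := by
  induction fuel generalizing p with
  | zero => rw [totalCostAux.eq_2, if_neg (by omega), totalCostAux.eq_1]
  | succ fuel ih =>
    conv_lhs => rw [totalCostAux.eq_2]
    conv_rhs => rw [totalCostAux.eq_2]
    split_ifs with hfit
    · have hw := hg ((T.drop p).take m) (by simp; omega)
      rw [ih (by omega)]
    · rfl

theorem totalCostAux_of_le_fuel (hg : ∀ w : List A, w.length = m → 1 ≤ g w) (T : List A)
    {fuel fuel' p : ℕ} (h : T.length < p + m + fuel) (hle : fuel ≤ fuel') :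
    totalCostAux f g m T fuel' p = totalCostAux f g m T fuel p := by
  induction fuel', hle using Nat.le_induction with
  | base => rfl
  | succ fuel' hle ih => rw [totalCostAux_succ_fuel f g m hg T (by omega), ih]

theorem totalCost_of_lt (T : List A) (h : T.length < m) : totalCost f g m T = 0 := by
  rw [totalCost, totalCostAux.eq_2, if_neg (by omega)]

theorem totalCost_of_le (hg : ∀ w : List A, w.length = m → 1 ≤ g w ∧ g w ≤ m) (T : List A)
    (h : m ≤ T.length) :
    totalCost f g m T = f (T.take m) + totalCost f g m (T.drop (g (T.take m))) := by
  obtain ⟨hg₁, hgm⟩ := hg (T.take m) (by simpa using h)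
  have hlen := List.length_drop (i := g (T.take m)) (l := T)
  rw [totalCost, totalCostAux.eq_2, if_pos (by omega), List.drop_zero, totalCost,
    totalCostAux_drop f g m T (by omega),
    totalCostAux_of_le_fuel f g m (fun w hw => (hg w hw).1) T
      (fuel := (T.drop (g (T.take m))).length + 1) (by omega) (by omega)]

def pendingShift (s : List A × ℕ) : ℕ :=
  if s.2 = 0 then g s.1 else s.2

theorem fullStep_eq (s : List A × ℕ) (σ : A) :
    fullStep g s σ = (s.1.tail ++ [σ], pendingShift g s - 1) := by
  unfold fullStep pendingShift
  split_ifs <;> first | omega | rfl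

theorem drop_tail_append_singleton (u : List A) (σ : A) {k : ℕ} (hk : k < u.length) :
    (u.tail ++ [σ]).drop k = u.drop (k + 1) ++ [σ] := by
  rw [List.drop_append_of_le_length (by simp; omega), List.drop_tail]

theorem daaRun_snd_eq_add_totalCost (hg : ∀ w : List A, w.length = m → 1 ≤ g w ∧ g w ≤ m)
    (R : List A) (s : List A × ℕ) (v : ℕ) (hs : s.1.length = m)
    (hd : 1 ≤ pendingShift g s) (hdm : pendingShift g s ≤ m) :
    (daaRun (fullStep g) (fullEmit f) (s, v) R).2
      = v + totalCost f g m (s.1.drop (pendingShift g s) ++ R) := by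
  induction R generalizing s v with
  | nil =>
    rw [List.append_nil, totalCost_of_lt f g m _ (by simp; omega)]
    rfl
  | cons σ R ih =>
    obtain ⟨k, hk⟩ : ∃ k, pendingShift g s = k + 1 := ⟨_, (Nat.succ_pred_eq_of_pos hd).symm⟩
    have hu : (s.1.tail ++ [σ]).length = m := by simp; omega
    have hlist : s.1.drop (k + 1) ++ σ :: R = (s.1.tail ++ [σ]).drop k ++ R := by
      rw [drop_tail_append_singleton _ _ (by omega), List.append_assoc, List.singleton_append]
    change (daaRun _ _ (fullStep g s σ, v + fullEmit f (fullStep g s σ)) R).2 = _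
    rw [fullStep_eq, hk, Nat.add_sub_cancel, hlist]
    generalize s.1.tail ++ [σ] = u at hu ⊢
    cases k with
    | zero =>
      obtain ⟨hg₁, hgm⟩ := hg u hu
      have hemit : fullEmit f (u, 0) = f u := if_pos rfl
      have hnext : pendingShift g (u, 0) = g u := if_pos rfl
      rw [hemit, ih (u, 0) _ hu (hnext ▸ hg₁) (hnext ▸ hgm), hnext, List.drop_zero,
        totalCost_of_le f g m hg (u ++ R) (by simp; omega), List.take_left' hu,
        List.drop_append_of_le_length (by omega), Nat.add_assoc]
    | succ k =>
      have hemit : fullEmit f (u, k + 1) = 0 := if_neg k.succ_ne_zero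
      have hnext : pendingShift g (u, k + 1) = k + 1 := if_neg k.succ_ne_zero
      rw [hemit, ih (u, k + 1) _ hu (by omega) (by omega), hnext, Nat.add_zero]

end

theorem daa_value_eq_totalCost_general {A : Type*}
    (m : ℕ) (S : List A) (hS : S.length = m)
    (f g : List A → ℕ)
    (hg : ∀ w : List A, w.length = m → 1 ≤ g w ∧ g w ≤ m)
    (T : List A) :
    valueD f g S m T = totalCost f g m T := by
  have hm : 1 ≤ m := (hg S hS).1.trans (hg S hS).2
  have hstart : pendingShift g (S, m) = m := if_neg (by omega)
  rw [valueD, daaRun_snd_eq_add_totalCost f g m hg T (S, m) 0 hS (by omega) (by omega), hstart,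
    ← hS, List.drop_length, List.nil_append, Nat.zero_add]

/-- Let `f : Σ^m → ℕ` be a cost function and `g : Σ^m → {1,…,m}` a shift
function, and let `D` be the DAA encoding `(f,g)` with start window `S`. Then for every text
`T ∈ Σ*`, `value_D(T)` equals the total cost of the window-based pattern matching algorithm
specified by `(f,g)` on `T`. -/
theorem daa_value_eq_totalCost {A : Type*} [Fintype A] [DecidableEq A] [Nonempty A]
    (m : ℕ) (hm : 1 ≤ m) (S : List A) (hS : S.length = m)
    (f g : List A → ℕ)
    (hg : ∀ w : List A, w.length = m → 1 ≤ g w ∧ g w ≤ m)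
    (T : List A) :
    valueD f g S m T = totalCost f g m T :=
  daa_value_eq_totalCost_general m S hS f g hg T
end

section
/- Let f : Σ^m → ℕ, g : Σ^m → {1,…,m}, let D be the DAA encoding (f,g) with start window S, and let R be a set of window representatives of length m that is compatible with (f,g), with transition function δ_R. Let D' be the reduced DAA built from R, δ_R, f and g. Then value_D(T) = value_{D'}(T) for every n ≥ 0 and every T ∈ Σ^n. -/
/-- Transition of the reduced DAA built from a representatives transition `δR` and lifted
shift `gR`: on reading `σ` in state `(r,k)` move to `(δR(r,σ), k-1)` if `k > 0` and to
`(δR(r,σ), gR(r)-1)` if `k = 0`. -/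
def redStep {A : Type*} (δR : List A → A → List A) (gR : List A → ℕ) :
    (List A × ℕ) → A → (List A × ℕ) :=
  fun s σ => (δR s.1 σ, if 0 < s.2 then s.2 - 1 else gR s.1 - 1)

/-- Emission of the reduced DAA with lifted cost `fR`: on entering `(r',k')`, add
`fR(r')` if `k' = 0` and `0` otherwise. -/
def redEmit {A : Type*} (fR : List A → ℕ) : (List A × ℕ) → ℕ :=
  fun s => if s.2 = 0 then fR s.1 else 0

/-- `rep_R(a)`: the longest suffix of `a` lying in the finite set `R`. -/
def repR {A : Type*} [DecidableEq A] (R : Finset (List A)) (a : List A) : List A :=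
  longestSuffixP (· ∈ R) a

/-! Map every state `(w, k)` of the full automaton to `(rep_R w, k)`. Along any run from a
window of length `m` the windows keep length `m`, and on such states the map commutes with
the transitions (by the defining property of `δR` and `gR (rep_R w) = g w`) and preserves the
emissions (`fR (rep_R w) = f w`). A run of the reduced automaton therefore shadows the run of
the full one state by state and accumulates the same value. -/

section Simulation

variable {A Q Q' : Type*} {step : Q → A → Q} {emit : Q → ℕ}
  {step' : Q' → A → Q'} {emit' : Q' → ℕ}

theorem daaRun_map_of_simulation (P : Q → Prop) (φ : Q → Q')
    (hP : ∀ q σ, P q → P (step q σ))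
    (hstep : ∀ q σ, P q → step' (φ q) σ = φ (step q σ))
    (hemit : ∀ q, P q → emit' (φ q) = emit q) :
    ∀ (T : List A) (q : Q) (v : ℕ), P q →
      daaRun step' emit' (φ q, v) T = Prod.map φ id (daaRun step emit (q, v) T)
  | [], _, _, _ => rfl
  | σ :: T, q, v, hq => by
    simp only [daaRun, hstep q σ hq, hemit _ (hP q σ hq)]
    exact daaRun_map_of_simulation P φ hP hstep hemit T _ _ (hP q σ hq)

end Simulation

section Reduction

variable {A : Type*} {m : ℕ}

theorem length_tail_append_singleton {w : List A} (hm : 1 ≤ m) (hw : w.length = m) (σ : A) :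
    (w.tail ++ [σ]).length = m := by
  simp only [List.length_append, List.length_tail, List.length_singleton]
  omega

variable [DecidableEq A]

theorem redStep_repR {R : Finset (List A)} {δR : List A → A → List A} {g gR : List A → ℕ}
    (hδR : ∀ a : List A, a.length = m → ∀ σ : A, δR (repR R a) σ = repR R (a.tail ++ [σ]))
    (hgR : ∀ a : List A, a.length = m → gR (repR R a) = g a)
    {w : List A} (hw : w.length = m) (k : ℕ) (σ : A) :
    redStep δR gR (repR R w, k) σ = Prod.map (repR R) id (fullStep g (w, k) σ) := by
  simp only [redStep, fullStep, Prod.map, id, hδR w hw, hgR w hw]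

theorem redEmit_repR {R : Finset (List A)} {f fR : List A → ℕ}
    (hfR : ∀ a : List A, a.length = m → fR (repR R a) = f a)
    {w : List A} (hw : w.length = m) (k : ℕ) :
    redEmit fR (repR R w, k) = fullEmit f (w, k) := by
  simp only [redEmit, fullEmit, hfR w hw]

end Reduction

theorem daa_value_eq_reduced_value_general {A : Type*} [DecidableEq A]
    (m : ℕ) (hm : 1 ≤ m) (S : List A) (hS : S.length = m)
    (f g : List A → ℕ)
    (R : Finset (List A))
    -- (2) a transition function δR : R × Σ → R compatible with rep_R
    (δR : List A → A → List A)
    (hδR : ∀ a : List A, a.length = m → ∀ σ : A,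
      δR (repR R a) σ = repR R (a.tail ++ [σ]))
    -- liftings of f and g to representatives (their values on representatives not of the
    -- form rep_R(a) are immaterial)
    (fR gR : List A → ℕ)
    (hfR : ∀ a : List A, a.length = m → fR (repR R a) = f a)
    (hgR : ∀ a : List A, a.length = m → gR (repR R a) = g a)
    (T : List A) :
    valueD f g S m T
      = (daaRun (redStep δR gR) (redEmit fR) ((repR R S, m), 0) T).2 := by
  have hsim := daaRun_map_of_simulation (fun q => q.1.length = m) (Prod.map (repR R) id)
    (fun q σ hq => length_tail_append_singleton hm hq σ)
    (fun q σ hq => redStep_repR hδR hgR hq q.2 σ)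
    (fun q hq => redEmit_repR hfR hq q.2) T (S, m) 0 hS
  exact (congrArg Prod.snd hsim).symm

/-- Let `f : Σ^m → ℕ`, `g : Σ^m → {1,…,m}`, let `D` be the DAA encoding
`(f,g)` with start window `S`, and let `R` be a set of window representatives of length `m`
that is compatible with `(f,g)`, with transition function `δR`. Let `D'` be the reduced DAA
built from `R`, `δR` and (the liftings `fR`, `gR` to representatives of) `f` and `g`.
Then `value_D(T) = value_{D'}(T)` for every text `T ∈ Σ*`. -/
theorem daa_value_eq_reduced_value {A : Type*} [Fintype A] [DecidableEq A] [Nonempty A]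
    (m : ℕ) (hm : 1 ≤ m) (S : List A) (hS : S.length = m)
    (f g : List A → ℕ)
    (hg : ∀ w : List A, w.length = m → 1 ≤ g w ∧ g w ≤ m)
    (R : Finset (List A))
    -- (1) every word of length m has a suffix in R, so rep_R is well-defined
    (hR1 : ∀ a : List A, a.length = m → ∃ t, t <:+ a ∧ t ∈ R)
    -- (2) a transition function δR : R × Σ → R compatible with rep_R
    (δR : List A → A → List A)
    (hδR_mem : ∀ r ∈ R, ∀ σ : A, δR r σ ∈ R)
    (hδR : ∀ a : List A, a.length = m → ∀ σ : A,
      δR (repR R a) σ = repR R (a.tail ++ [σ]))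
    -- compatibility of R with (f,g)
    (hcompat : ∀ a a' : List A, a.length = m → a'.length = m →
      repR R a = repR R a' → f a = f a' ∧ g a = g a')
    -- liftings of f and g to representatives (their values on representatives not of the
    -- form rep_R(a) are immaterial)
    (fR gR : List A → ℕ)
    (hfR : ∀ a : List A, a.length = m → fR (repR R a) = f a)
    (hgR : ∀ a : List A, a.length = m → gR (repR R a) = g a)
    (T : List A) :
    valueD f g S m T
      = (daaRun (redStep δR gR) (redEmit fR) ((repR R S, m), 0) T).2 :=
  daa_value_eq_reduced_value_general m hm S hS f g R δR hδR fR gR hfR hgR T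
end

section
/- Let f : Σ^m → ℕ, g : Σ^m → {1,…,m}, let D be the DAA encoding (f,g) with start window S, and let R be a set of window representatives of length m compatible with (f,g), with transition function δ_R, and D' the reduced DAA. For every T ∈ Σ*: if reading T from the start configuration of D yields state (w,k) with value v, and reading T from the start configuration of D' yields state (r,k') with value v', then v = v', k = k', and r = rep_R(w). -/
theorem daaRun_map {A Q Q' : Type*} {step : Q → A → Q} {emit : Q → ℕ}
    {step' : Q' → A → Q'} {emit' : Q' → ℕ} (φ : Q → Q') (P : Q → Prop)
    (hP : ∀ q σ, P q → P (step q σ))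
    (hstep : ∀ q σ, P q → step' (φ q) σ = φ (step q σ))
    (hemit : ∀ q, P q → emit' (φ q) = emit q)
    (T : List A) (q : Q) (v : ℕ) (hq : P q) :
    daaRun step' emit' (φ q, v) T = Prod.map φ id (daaRun step emit (q, v) T) := by
  induction T generalizing q v with
  | nil => rfl
  | cons σ T ih =>
    simp only [daaRun, hstep q σ hq, hemit _ (hP q σ hq)]
    exact ih _ _ (hP q σ hq)

theorem daa_reduced_invariant_general {A : Type*} [DecidableEq A]
    (m : ℕ) (hm : 1 ≤ m) (S : List A) (hS : S.length = m)
    (f g : List A → ℕ)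
    (R : Finset (List A))
    -- (2) a transition function δR : R × Σ → R compatible with rep_R
    (δR : List A → A → List A)
    (hδR : ∀ a : List A, a.length = m → ∀ σ : A,
      δR (repR R a) σ = repR R (a.tail ++ [σ]))
    -- liftings of f and g to representatives
    (fR gR : List A → ℕ)
    (hfR : ∀ a : List A, a.length = m → fR (repR R a) = f a)
    (hgR : ∀ a : List A, a.length = m → gR (repR R a) = g a)
    (T : List A) :
    (daaRun (fullStep g) (fullEmit f) ((S, m), 0) T).2
        = (daaRun (redStep δR gR) (redEmit fR) ((repR R S, m), 0) T).2
    ∧ (daaRun (fullStep g) (fullEmit f) ((S, m), 0) T).1.2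
        = (daaRun (redStep δR gR) (redEmit fR) ((repR R S, m), 0) T).1.2
    ∧ (daaRun (redStep δR gR) (redEmit fR) ((repR R S, m), 0) T).1.1
        = repR R (daaRun (fullStep g) (fullEmit f) ((S, m), 0) T).1.1 := by
  have hlength : ∀ (s : List A × ℕ) σ, s.1.length = m → (fullStep g s σ).1.length = m := by
    intro s σ hs
    simp only [fullStep, List.length_append, List.length_tail, List.length_singleton, hs]
    omega
  have hstep : ∀ (s : List A × ℕ) σ, s.1.length = m →
      redStep δR gR (repR R s.1, s.2) σ = (repR R (fullStep g s σ).1, (fullStep g s σ).2) := by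
    intro s σ hs
    simp only [redStep, fullStep, hδR _ hs, hgR _ hs]
  have hemit : ∀ s : List A × ℕ, s.1.length = m → redEmit fR (repR R s.1, s.2) = fullEmit f s := by
    intro s hs
    simp only [redEmit, fullEmit, hfR _ hs]
  rw [daaRun_map (fun s => (repR R s.1, s.2)) (fun s => s.1.length = m) hlength hstep hemit
    T (S, m) 0 hS]
  exact ⟨rfl, rfl, rfl⟩

/-- With `D` the DAA encoding `(f,g)` with start window `S` and `D'` the
reduced DAA built from a compatible set of window representatives `R` with transition `δR`:
for every text `T`, if reading `T` from the start configuration of `D` yields state `(w,k)`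
with value `v`, and reading `T` from the start configuration of `D'` yields state `(r,k')`
with value `v'`, then `v = v'`, `k = k'`, and `r = rep_R(w)`. -/
theorem daa_reduced_invariant {A : Type*} [Fintype A] [DecidableEq A] [Nonempty A]
    (m : ℕ) (hm : 1 ≤ m) (S : List A) (hS : S.length = m)
    (f g : List A → ℕ)
    (hg : ∀ w : List A, w.length = m → 1 ≤ g w ∧ g w ≤ m)
    (R : Finset (List A))
    -- (1) every word of length m has a suffix in R, so rep_R is well-defined
    (hR1 : ∀ a : List A, a.length = m → ∃ t, t <:+ a ∧ t ∈ R)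
    -- (2) a transition function δR : R × Σ → R compatible with rep_R
    (δR : List A → A → List A)
    (hδR_mem : ∀ r ∈ R, ∀ σ : A, δR r σ ∈ R)
    (hδR : ∀ a : List A, a.length = m → ∀ σ : A,
      δR (repR R a) σ = repR R (a.tail ++ [σ]))
    -- compatibility of R with (f,g)
    (hcompat : ∀ a a' : List A, a.length = m → a'.length = m →
      repR R a = repR R a' → f a = f a' ∧ g a = g a')
    -- liftings of f and g to representatives
    (fR gR : List A → ℕ)
    (hfR : ∀ a : List A, a.length = m → fR (repR R a) = f a)
    (hgR : ∀ a : List A, a.length = m → gR (repR R a) = g a)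
    (T : List A) :
    (daaRun (fullStep g) (fullEmit f) ((S, m), 0) T).2
        = (daaRun (redStep δR gR) (redEmit fR) ((repR R S, m), 0) T).2
    ∧ (daaRun (fullStep g) (fullEmit f) ((S, m), 0) T).1.2
        = (daaRun (redStep δR gR) (redEmit fR) ((repR R S, m), 0) T).1.2
    ∧ (daaRun (redStep δR gR) (redEmit fR) ((repR R S, m), 0) T).1.1
        = repR R (daaRun (fullStep g) (fullEmit f) ((S, m), 0) T).1.1 :=
  daa_reduced_invariant_general m hm S hS f g R δR hδR fR gR hfR hgR T
end

section
/- For every pattern S ∈ Σ^m, the set subcl(S) is a set of window representatives of length m; explicitly: (1) every a ∈ Σ^m has a suffix lying in subcl(S), so rep_{subcl(S)}(a) is well-defined; and (2) the function δ(r,σ) := (the longest suffix of rσ that lies in subcl(S)) maps subcl(S) × Σ into subcl(S) and satisfies δ(rep_{subcl(S)}(a), σ) = rep_{subcl(S)}(a_1…a_{m−1}σ) for all a ∈ Σ^m and σ ∈ Σ. -/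
/-- `rep_{subcl(S)}(a)`: the longest suffix of `a` lying in `subcl(S)`, the set of all
contiguous substrings of `S` (including the empty string), i.e. the longest suffix of `a`
that is an infix of `S`. -/
def repSub {A : Type*} [DecidableEq A] (S : List A) (a : List A) : List A :=
  longestSuffixP (· <:+: S) a

/-! Both sides equal the longest suffix of `a σ` in `subcl(S)`. Since `subcl(S)` is closed under
prefixes, that suffix is empty or of the form `u σ` with `u` a good suffix of `a`, hence of
`rep(a)`: the failure-function step of Knuth–Morris–Pratt. Dropping `a₀` loses nothing, because
no string of `subcl(S)` is longer than `m`. -/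

namespace longestSuffixP

variable {A : Type*} (p : List A → Prop) [DecidablePred p]

@[simp]
lemma nil : longestSuffixP p [] = [] := by
  by_cases h : p [] <;> simp [longestSuffixP, h]

lemma cons (x : A) (a : List A) :
    longestSuffixP p (x :: a) = if p (x :: a) then x :: a else longestSuffixP p a := by
  by_cases h : p (x :: a) <;> simp [longestSuffixP, h]

lemma isSuffix (a : List A) : longestSuffixP p a <:+ a := by
  induction a with
  | nil => simp
  | cons x a ih =>
    rw [cons]
    split_ifs
    · exact List.suffix_rfl
    · exact ih.trans (List.suffix_cons x a)

variable {p}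

lemma spec (hnil : p []) (a : List A) : p (longestSuffixP p a) := by
  induction a with
  | nil => simpa using hnil
  | cons x a ih =>
    rw [cons]
    split_ifs with h
    · exact h
    · exact ih

lemma isSuffix_longestSuffixP {a t : List A} (ht : t <:+ a) (hpt : p t) :
    t <:+ longestSuffixP p a := by
  induction a with
  | nil => simp_all
  | cons x a ih =>
    rw [cons]
    rcases List.suffix_cons_iff.mp ht with rfl | ht
    · simp [hpt]
    · split_ifs
      · exact ht.trans (List.suffix_cons x a)
      · exact ih ht

lemma longestSuffixP_append_singleton (hnil : p []) (hprefix : ∀ ⦃u v⦄, u <+: v → p v → p u)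
    (a : List A) (σ : A) :
    longestSuffixP p (longestSuffixP p a ++ [σ]) = longestSuffixP p (a ++ [σ]) := by
  have hle : longestSuffixP p (longestSuffixP p a ++ [σ]) <:+ longestSuffixP p (a ++ [σ]) :=
    isSuffix_longestSuffixP
      ((isSuffix p _).trans (List.suffix_append_self_iff.mpr (isSuffix p a))) (spec hnil _)
  have hge : longestSuffixP p (a ++ [σ]) <:+ longestSuffixP p (longestSuffixP p a ++ [σ]) := by
    refine isSuffix_longestSuffixP ?_ (spec hnil _)
    rcases List.suffix_concat_iff.mp (isSuffix p (a ++ [σ])) with h | ⟨u, h, hua⟩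
    · simp [h]
    · have hu : p u := hprefix (List.prefix_append u [σ]) (h ▸ spec hnil _)
      rw [h]
      exact List.suffix_append_self_iff.mpr (isSuffix_longestSuffixP hua hu)
  exact hle.eq_of_length_le hge.length_le

end longestSuffixP

section repSub

variable {A : Type*} [DecidableEq A] (S : List A)

lemma repSub_isInfix (a : List A) : repSub S a <:+: S :=
  longestSuffixP.spec (p := (· <:+: S)) List.nil_infix a

lemma repSub_repSub_append_singleton (a : List A) (σ : A) :
    repSub S (repSub S a ++ [σ]) = repSub S (a ++ [σ]) :=
  longestSuffixP.longestSuffixP_append_singleton (p := (· <:+: S)) List.nil_infix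
    (fun _ _ huv hv => huv.isInfix.trans hv) a σ

lemma repSub_append_singleton_eq_tail {a : List A} (ha : S.length ≤ a.length) (σ : A) :
    repSub S (a ++ [σ]) = repSub S (a.tail ++ [σ]) := by
  cases a with
  | nil => rfl
  | cons x a =>
    have hlong : ¬ x :: (a ++ [σ]) <:+: S := fun h => by
      have := h.length_le
      simp only [List.length_cons, List.length_append] at this ha
      omega
    simp [repSub, longestSuffixP.cons, hlong]

end repSub

theorem subcl_is_window_representatives_general {A : Type*} [DecidableEq A]
    (m : ℕ) (S : List A) (hS : S.length = m) :
    (∀ a : List A, a.length = m → ∃ t, t <:+ a ∧ t <:+: S)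
    ∧ (∀ r : List A, r <:+: S → ∀ σ : A, repSub S (r ++ [σ]) <:+: S)
    ∧ (∀ a : List A, a.length = m → ∀ σ : A,
        repSub S (repSub S a ++ [σ]) = repSub S (a.tail ++ [σ])) := by
  refine ⟨fun a _ => ⟨[], List.nil_suffix, List.nil_infix⟩,
    fun r _ σ => repSub_isInfix S _, fun a ha σ => ?_⟩
  rw [repSub_repSub_append_singleton, repSub_append_singleton_eq_tail S (by omega)]

/-- For every pattern `S ∈ Σ^m`, the set `subcl(S)` of contiguous substrings
of `S` (including `ε`) is a set of window representatives of length `m`; explicitly: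
(1) every `a ∈ Σ^m` has a suffix lying in `subcl(S)`, so `rep_{subcl(S)}(a)` is well-defined;
and (2) the function `δ(r,σ) := `(the longest suffix of `rσ` lying in `subcl(S)`) maps
`subcl(S) × Σ` into `subcl(S)` and satisfies
`δ(rep_{subcl(S)}(a), σ) = rep_{subcl(S)}(a₁…a_{m−1}σ)` for all `a ∈ Σ^m` and `σ ∈ Σ`. -/
theorem subcl_is_window_representatives {A : Type*} [Fintype A] [DecidableEq A] [Nonempty A]
    (m : ℕ) (hm : 1 ≤ m) (S : List A) (hS : S.length = m) :
    (∀ a : List A, a.length = m → ∃ t, t <:+ a ∧ t <:+: S)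
    ∧ (∀ r : List A, r <:+: S → ∀ σ : A, repSub S (r ++ [σ]) <:+: S)
    ∧ (∀ a : List A, a.length = m → ∀ σ : A,
        repSub S (repSub S a ++ [σ]) = repSub S (a.tail ++ [σ])) :=
  subcl_is_window_representatives_general m S hS
end

section
/- Let S ∈ Σ^m and let a, a' ∈ Σ^m satisfy rep_{subcl(S)}(a) = rep_{subcl(S)}(a'). Then f_BMH(a) = f_BMH(a') and g_BMH(a) = g_BMH(a'). -/
open scoped Classical in
/-- `f_BM(w)` (= `f_BMH(w)`): the cost of window `w`, i.e. `m` if `w = S`, and otherwise the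
least `i ∈ {1,…,m}` with `w_{m−i} ≠ s_{m−i}` (0-indexed; comparison from the right). -/
noncomputable def fBM {A : Type*} [Inhabited A] [DecidableEq A]
    (S : List A) (m : ℕ) (w : List A) : ℕ :=
  if w = S then m
  else sInf {i : ℕ | 1 ≤ i ∧ i ≤ m ∧ w.getI (m - i) ≠ S.getI (m - i)}

open scoped Classical in
/-- The bad-character rule `bc^S(w,i)`: `m−i+1` if `w_{m−i} ∉ {s_0,…,s_{m−i−1}}`,
and otherwise the least `k ∈ {1,…,m−i}` with `w_{m−i} = s_{m−i−k}`. -/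
noncomputable def bcBM {A : Type*} [Inhabited A] [DecidableEq A]
    (S : List A) (m : ℕ) (w : List A) (i : ℕ) : ℕ :=
  if ∃ j : ℕ, j + i < m ∧ S.getI j = w.getI (m - i) then
    sInf {k : ℕ | 1 ≤ k ∧ k ≤ m - i ∧ w.getI (m - i) = S.getI (m - i - k)}
  else m - i + 1

/-- `𝒮^S(w,i)`: the set of `k ∈ {0,…,m−i}` with `s_k…s_{k+i−2} = w_{m−i+1}…w_{m−1}` and
`s_{k−1} ≠ w_{m−i}` whenever `k ≥ 1`. -/
def SBM {A : Type*} [Inhabited A] (S : List A) (m : ℕ) (w : List A) (i : ℕ) : Set ℕ :=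
  {k : ℕ | k + i ≤ m ∧ (∀ j : ℕ, j + 1 < i → S.getI (k + j) = w.getI (m - i + 1 + j)) ∧
    (1 ≤ k → S.getI (k - 1) ≠ w.getI (m - i))}

/-- `𝒦^S(w,i)`: the set of `k ∈ {0,…,i−2}` with `s_0…s_k = w_{m−k−1}…w_{m−1}`. -/
def KBM {A : Type*} [Inhabited A] (S : List A) (m : ℕ) (w : List A) (i : ℕ) : Set ℕ :=
  {k : ℕ | k + 2 ≤ i ∧ ∀ j : ℕ, j ≤ k → S.getI j = w.getI (m - k - 1 + j)}

open scoped Classical in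
/-- The good-suffix rule `gs^S(w,i)`. -/
noncomputable def gsBM {A : Type*} [Inhabited A] (S : List A) (m : ℕ) (w : List A) (i : ℕ) : ℕ :=
  if (SBM S m w i).Nonempty then m - i - sSup (SBM S m w i) + 1
  else if (KBM S m w i).Nonempty then m - sSup (KBM S m w i) - 1
  else m

/-- The Boyer–Moore shift `g_BM(w) = max{bc^S(w, f_BM(w)), gs^S(w, f_BM(w))}`. -/
noncomputable def gBM {A : Type*} [Inhabited A] [DecidableEq A]
    (S : List A) (m : ℕ) (w : List A) : ℕ :=
  max (bcBM S m w (fBM S m w)) (gsBM S m w (fBM S m w))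

/-- The Boyer–Moore–Horspool cost `f_BMH = f_BM`. -/
noncomputable def fBMH {A : Type*} [Inhabited A] [DecidableEq A]
    (S : List A) (m : ℕ) (w : List A) : ℕ :=
  fBM S m w

/-- The Boyer–Moore–Horspool shift `g_BMH(w) = bc^S(w,1)`. -/
noncomputable def gBMH {A : Type*} [Inhabited A] [DecidableEq A]
    (S : List A) (m : ℕ) (w : List A) : ℕ :=
  bcBM S m w 1

/-!
Write `r` for the common value of `repSub S a` and `repSub S a'`, a suffix of both windows.
A window `w ≠ S` must disagree with `S` within its last `|r| + 1` letters: otherwise those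
letters form a suffix of `w` that is an infix of `S` and is longer than `r`. As `a` and `a'`
agree on their last `|r|` letters, their first mismatches with `S` (read from the right)
coincide. For the shift, either `r` is nonempty and `a`, `a'` end in the same letter, or `r`
is empty and neither last letter occurs in `S`.
-/

section LongestSuffix

variable {A : Type*} (p : List A → Prop) [DecidablePred p]

theorem longestSuffixP_nil : longestSuffixP p [] = [] := by
  by_cases h : p [] <;> simp [longestSuffixP, h]

theorem longestSuffixP_cons (x : A) (xs : List A) :
    longestSuffixP p (x :: xs) = if p (x :: xs) then x :: xs else longestSuffixP p xs := by
  by_cases h : p (x :: xs) <;> simp [longestSuffixP, h]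

theorem longestSuffixP_suffix (a : List A) : longestSuffixP p a <:+ a := by
  induction a with
  | nil => rw [longestSuffixP_nil]
  | cons x xs ih =>
    rw [longestSuffixP_cons]
    split
    · exact List.suffix_refl _
    · exact ih.trans (List.suffix_cons x xs)

theorem longestSuffixP_spec (hnil : p []) (a : List A) : p (longestSuffixP p a) := by
  induction a with
  | nil => rwa [longestSuffixP_nil]
  | cons x xs ih =>
    rw [longestSuffixP_cons]
    split <;> assumption

variable {p} in
theorem length_le_longestSuffixP {a t : List A} (ht : t <:+ a) (hpt : p t) :
    t.length ≤ (longestSuffixP p a).length := by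
  induction a with
  | nil => simp [List.eq_nil_of_suffix_nil ht]
  | cons x xs ih =>
    rw [longestSuffixP_cons]
    rcases List.suffix_cons_iff.mp ht with rfl | h
    · simp [hpt]
    · split
      · exact ht.length_le
      · exact ih h

end LongestSuffix

namespace List

variable {A : Type*} [Inhabited A]

theorem IsSuffix.getI_length_sub {r a : List A} (h : r <:+ a) {i : ℕ} (hi : 1 ≤ i)
    (hir : i ≤ r.length) : a.getI (a.length - i) = r.getI (r.length - i) := by
  have := h.length_le
  rw [getI_eq_getElem _ (by omega), getI_eq_getElem _ (by omega), h.getElem (by omega)]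
  congr 1
  omega

theorem drop_sub_eq_of_getI_sub_eq {w S : List A} {m k : ℕ} (hw : w.length = m)
    (hS : S.length = m) (hk : k ≤ m)
    (h : ∀ i, 1 ≤ i → i ≤ k → w.getI (m - i) = S.getI (m - i)) :
    w.drop (m - k) = S.drop (m - k) := by
  refine ext_getElem (by simp [hw, hS]) fun n hnw _ => ?_
  simp only [length_drop, hw] at hnw
  have key := h (k - n) (by omega) (by omega)
  rwa [show m - (k - n) = m - k + n by omega, getI_eq_getElem _ (by omega),
    getI_eq_getElem _ (by omega), ← getElem_drop, ← getElem_drop] at key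

end List

section RepSub

variable {A : Type*} [DecidableEq A]

theorem repSub_suffix (S a : List A) : repSub S a <:+ a :=
  longestSuffixP_suffix _ a

theorem repSub_infix (S a : List A) : repSub S a <:+: S :=
  longestSuffixP_spec (· <:+: S) List.nil_infix a

theorem length_le_length_repSub {S a t : List A} (ht : t <:+ a) (htS : t <:+: S) :
    t.length ≤ (repSub S a).length :=
  length_le_longestSuffixP ht htS

theorem repSub_eq_self_iff {S w : List A} (hw : w.length = S.length) :
    repSub S w = S ↔ w = S := by
  constructor
  · intro h
    have hsuf := repSub_suffix S w
    rw [h] at hsuf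
    exact (hsuf.eq_of_length hw.symm).symm
  · rintro rfl
    exact (repSub_suffix w w).eq_of_length
      (le_antisymm (repSub_suffix w w).length_le
        (length_le_length_repSub (List.suffix_refl w) (List.infix_refl w)))

variable [Inhabited A]

theorem exists_mismatch_le_length_repSub_succ {S w : List A} {m : ℕ} (hS : S.length = m)
    (hw : w.length = m) (hne : w ≠ S) :
    ∃ i ≤ (repSub S w).length + 1, 1 ≤ i ∧ i ≤ m ∧ w.getI (m - i) ≠ S.getI (m - i) := by
  by_contra! hagree
  set k := min ((repSub S w).length + 1) m
  have hdrop : w.drop (m - k) = S.drop (m - k) :=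
    List.drop_sub_eq_of_getI_sub_eq hw hS (min_le_right _ _)
      fun i hi hik => hagree i (hik.trans (min_le_left _ _)) hi (hik.trans (min_le_right _ _))
  by_cases hkm : k = m
  · rw [hkm, Nat.sub_self, List.drop_zero, List.drop_zero] at hdrop
    exact hne hdrop
  · have hlong := length_le_length_repSub (List.drop_suffix (m - k) w)
      (hdrop ▸ (List.drop_suffix (m - k) S).isInfix)
    simp only [List.length_drop, hw] at hlong
    omega

theorem getI_sub_one_notMem_of_repSub_eq_nil {S w : List A} {m : ℕ} (hw : w.length = m)
    (hm : 1 ≤ m) (hr : repSub S w = []) : w.getI (m - 1) ∉ S := by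
  intro hmem
  have hlast : w.drop (m - 1) = [w.getI (m - 1)] := by
    rw [List.drop_eq_getElem_cons (by omega), List.drop_eq_nil_of_le (by omega),
      List.getI_eq_getElem _ (by omega)]
  have := length_le_length_repSub (hlast ▸ List.drop_suffix (m - 1) w)
    ((List.singleton_infix_iff _ _).mpr hmem)
  simp [hr] at this

theorem getI_sub_eq_of_repSub_eq {S a a' : List A} {m : ℕ} (ha : a.length = m)
    (ha' : a'.length = m) (hrep : repSub S a = repSub S a') {i : ℕ} (hi : 1 ≤ i)
    (hit : i ≤ (repSub S a).length) : a.getI (m - i) = a'.getI (m - i) := by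
  have e := (repSub_suffix S a).getI_length_sub hi hit
  have e' := (repSub_suffix S a').getI_length_sub hi (hrep ▸ hit)
  rw [ha] at e
  rw [ha', ← hrep] at e'
  rw [e, e']

end RepSub

theorem Nat.sInf_eq_of_forall_le_iff {P Q : ℕ → Prop} {t : ℕ} (hPQ : ∀ i ≤ t, P i ↔ Q i)
    (hP : ∃ i ≤ t + 1, P i) (hQ : ∃ i ≤ t + 1, Q i) : sInf {i | P i} = sInf {i | Q i} := by
  obtain ⟨i, hit, hi⟩ := hP
  obtain ⟨j, hjt, hj⟩ := hQ
  have hp : sInf {i | P i} ≤ t + 1 := (Nat.sInf_le hi).trans hit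
  have hq : sInf {i | Q i} ≤ t + 1 := (Nat.sInf_le hj).trans hjt
  have hPmem : P (sInf {i | P i}) := Nat.sInf_mem ⟨i, hi⟩
  have hQmem : Q (sInf {i | Q i}) := Nat.sInf_mem ⟨j, hj⟩
  apply le_antisymm
  · by_cases hqt : sInf {i | Q i} ≤ t
    · exact Nat.sInf_le ((hPQ _ hqt).mpr hQmem)
    · omega
  · by_cases hpt : sInf {i | P i} ≤ t
    · exact Nat.sInf_le ((hPQ _ hpt).mp hPmem)
    · omega

section BoyerMoore

variable {A : Type*} [DecidableEq A] [Inhabited A]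

theorem fBM_eq_of_repSub_eq {S a a' : List A} {m : ℕ} (hS : S.length = m)
    (ha : a.length = m) (ha' : a'.length = m) (hrep : repSub S a = repSub S a') :
    fBM S m a = fBM S m a' := by
  have hiff : a = S ↔ a' = S := by
    rw [← repSub_eq_self_iff (ha.trans hS.symm), ← repSub_eq_self_iff (ha'.trans hS.symm), hrep]
  by_cases haS : a = S
  · rw [haS, hiff.mp haS]
  have ha'S : a' ≠ S := mt hiff.mpr haS
  unfold fBM
  rw [if_neg haS, if_neg ha'S]
  refine Nat.sInf_eq_of_forall_le_iff (fun i hit => ?_)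
    (exists_mismatch_le_length_repSub_succ hS ha haS)
    (hrep ▸ exists_mismatch_le_length_repSub_succ hS ha' ha'S)
  rcases Nat.eq_zero_or_pos i with rfl | hi
  · simp
  · rw [getI_sub_eq_of_repSub_eq ha ha' hrep hi hit]

theorem bcBM_congr (S : List A) (m : ℕ) {w w' : List A} (i : ℕ)
    (h : w.getI (m - i) = w'.getI (m - i)) : bcBM S m w i = bcBM S m w' i := by
  unfold bcBM
  rw [h]

theorem bcBM_one_of_repSub_eq_nil {S w : List A} {m : ℕ} (hS : S.length = m)
    (hw : w.length = m) (hr : repSub S w = []) : bcBM S m w 1 = m - 1 + 1 := by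
  have hno : ¬∃ j, j + 1 < m ∧ S.getI j = w.getI (m - 1) := by
    rintro ⟨j, hj, hSj⟩
    apply getI_sub_one_notMem_of_repSub_eq_nil hw (by omega) hr
    rw [← hSj, List.getI_eq_getElem _ (by omega)]
    exact List.getElem_mem _
  rw [bcBM, if_neg hno]

theorem bcBM_one_eq_of_repSub_eq {S a a' : List A} {m : ℕ} (hS : S.length = m)
    (ha : a.length = m) (ha' : a'.length = m) (hrep : repSub S a = repSub S a') :
    bcBM S m a 1 = bcBM S m a' 1 := by
  by_cases hr : repSub S a = []
  · rw [bcBM_one_of_repSub_eq_nil hS ha hr, bcBM_one_of_repSub_eq_nil hS ha' (hrep ▸ hr)]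
  have hpos : 1 ≤ (repSub S a).length := List.length_pos_iff.mpr hr
  exact bcBM_congr S m 1 (getI_sub_eq_of_repSub_eq ha ha' hrep le_rfl hpos)

end BoyerMoore

theorem subcl_compatible_BMH_general {A : Type*} [DecidableEq A] [Inhabited A]
    (m : ℕ) (S : List A) (hS : S.length = m)
    (a a' : List A) (ha : a.length = m) (ha' : a'.length = m)
    (hrep : repSub S a = repSub S a') :
    fBMH S m a = fBMH S m a' ∧ gBMH S m a = gBMH S m a' :=
  ⟨fBM_eq_of_repSub_eq hS ha ha' hrep, bcBM_one_eq_of_repSub_eq hS ha ha' hrep⟩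

/-- Let `S ∈ Σ^m` and let `a, a' ∈ Σ^m` satisfy
`rep_{subcl(S)}(a) = rep_{subcl(S)}(a')`. Then `f_BMH(a) = f_BMH(a')` and
`g_BMH(a) = g_BMH(a')`. -/
theorem subcl_compatible_BMH {A : Type*} [Fintype A] [DecidableEq A] [Inhabited A]
    (m : ℕ) (hm : 1 ≤ m) (S : List A) (hS : S.length = m)
    (a a' : List A) (ha : a.length = m) (ha' : a'.length = m)
    (hrep : repSub S a = repSub S a') :
    fBMH S m a = fBMH S m a' ∧ gBMH S m a = gBMH S m a' :=
  subcl_compatible_BMH_general m S hS a a' ha ha' hrep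
end

section
/- Let S ∈ Σ^m and let a, a' ∈ Σ^m satisfy rep_{subcl(S)}(a) = rep_{subcl(S)}(a'). Then f_BDM(a) = f_BDM(a') and g_BDM(a) = g_BDM(a'). -/
/-- `j^S_w`: the largest `j ∈ {0,…,m}` such that the length-`j` suffix `w_{m−j}…w_{m−1}`
of `w` is a contiguous substring (infix) of `S`; the empty string counts. -/
noncomputable def jBDM {A : Type*} [DecidableEq A] (S : List A) (m : ℕ) (w : List A) : ℕ :=
  sSup {j : ℕ | j ≤ m ∧ w.drop (m - j) <:+: S}

open scoped Classical in
/-- `f_BDM(w)`: `m` if `w = S`, and `j^S_w + 1` otherwise. -/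
noncomputable def fBDM {A : Type*} [DecidableEq A] (S : List A) (m : ℕ) (w : List A) : ℕ :=
  if w = S then m else jBDM S m w + 1

/-- `I^S(w)`: the set of `i ∈ {0,…,m−1}` such that the length-`i` suffix `w_{m−i}…w_{m−1}`
of `w` is a prefix of `S`; the empty string counts. -/
def IBDM {A : Type*} (S : List A) (m : ℕ) (w : List A) : Set ℕ :=
  {i : ℕ | i < m ∧ w.drop (m - i) <+: S}

/-- `g_BDM(w) = min{ m−i : i ∈ I^S(w) }`. -/
noncomputable def gBDM {A : Type*} (S : List A) (m : ℕ) (w : List A) : ℕ :=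
  sInf {d : ℕ | ∃ i ∈ IBDM S m w, d = m - i}

/-!
A suffix of `a` lying in `subcl(S)` is a suffix of `rep(a) = rep(a')`, hence a suffix of `a'`
of the same length: so two words of equal length with the same representative agree on every
suffix that is an infix of `S`, and in particular have the same such suffixes. Both `f_BDM` and
`g_BDM` only depend on which suffixes are infixes (prefixes of `S` are infixes, and `w = S`
says that the whole of `w` is one).
-/

section LongestSuffix

variable {A : Type*} (p : List A → Prop) [DecidablePred p]

theorem suffix_longestSuffixP {a t : List A} (hta : t <:+ a) (ht : p t) :
    t <:+ longestSuffixP p a := by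
  induction a with
  | nil => rw [List.suffix_nil.mp hta]; exact List.nil_suffix
  | cons x xs ih =>
    unfold longestSuffixP
    rw [List.tails_cons, List.filter_cons]
    by_cases hx : p (x :: xs)
    · simpa [hx] using hta
    · simp only [hx, decide_false, Bool.false_eq_true, if_false]
      rcases List.suffix_cons_iff.mp hta with rfl | hxs
      · exact absurd ht hx
      · exact ih hxs

end LongestSuffix

section RepSub

variable {A : Type*} [DecidableEq A] {S a a' : List A}

theorem drop_eq_of_repSub_eq (hlen : a.length = a'.length) (hrep : repSub S a = repSub S a')
    {k : ℕ} (hk : a.drop k <:+: S) : a'.drop k = a.drop k := by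
  have hsuf_rep : a.drop k <:+ repSub S a :=
    suffix_longestSuffixP (· <:+: S) (List.drop_suffix k a) hk
  have hsuf : a.drop k <:+ a' := (hrep ▸ hsuf_rep).trans (longestSuffixP_suffix _ a')
  have hlen' : (a'.drop k).length = (a.drop k).length := by simp [hlen]
  exact (List.suffix_of_suffix_length_le (List.drop_suffix k a') hsuf hlen'.le).eq_of_length
    hlen'

theorem drop_infix_iff_of_repSub_eq (hlen : a.length = a'.length)
    (hrep : repSub S a = repSub S a') (k : ℕ) : a.drop k <:+: S ↔ a'.drop k <:+: S :=
  ⟨fun hk => drop_eq_of_repSub_eq hlen hrep hk ▸ hk,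
    fun hk => drop_eq_of_repSub_eq hlen.symm hrep.symm hk ▸ hk⟩

theorem drop_prefix_iff_of_repSub_eq (hlen : a.length = a'.length)
    (hrep : repSub S a = repSub S a') (k : ℕ) : a.drop k <+: S ↔ a'.drop k <+: S :=
  ⟨fun hk => drop_eq_of_repSub_eq hlen hrep hk.isInfix ▸ hk,
    fun hk => drop_eq_of_repSub_eq hlen.symm hrep.symm hk.isInfix ▸ hk⟩

theorem eq_iff_of_repSub_eq (hlen : a.length = a'.length) (hrep : repSub S a = repSub S a') :
    a = S ↔ a' = S := by
  have hself : ∀ {b b' : List A}, b.length = b'.length → repSub S b = repSub S b' →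
      b = S → b' = S := fun hlen hrep hb => by
    simpa [hb] using drop_eq_of_repSub_eq (k := 0) hlen hrep (hb ▸ List.infix_rfl)
  exact ⟨hself hlen hrep, hself hlen.symm hrep.symm⟩

end RepSub

theorem subcl_compatible_BDM_general {A : Type*} [DecidableEq A]
    (m : ℕ) (S : List A)
    (a a' : List A) (ha : a.length = m) (ha' : a'.length = m)
    (hrep : repSub S a = repSub S a') :
    fBDM S m a = fBDM S m a' ∧ gBDM S m a = gBDM S m a' := by
  have hlen : a.length = a'.length := ha.trans ha'.symm
  have hj : jBDM S m a = jBDM S m a' := by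
    simp only [jBDM, drop_infix_iff_of_repSub_eq hlen hrep]
  have hI : IBDM S m a = IBDM S m a' := by
    simp only [IBDM, drop_prefix_iff_of_repSub_eq hlen hrep]
  refine ⟨?_, by rw [gBDM, gBDM, hI]⟩
  simp only [fBDM, eq_iff_of_repSub_eq hlen hrep, hj]

/-- Let `S ∈ Σ^m` and let `a, a' ∈ Σ^m` satisfy
`rep_{subcl(S)}(a) = rep_{subcl(S)}(a')`. Then `f_BDM(a) = f_BDM(a')` and
`g_BDM(a) = g_BDM(a')`. -/
theorem subcl_compatible_BDM {A : Type*} [Fintype A] [DecidableEq A] [Nonempty A]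
    (m : ℕ) (hm : 1 ≤ m) (S : List A) (hS : S.length = m)
    (a a' : List A) (ha : a.length = m) (ha' : a'.length = m)
    (hrep : repSub S a = repSub S a') :
    fBDM S m a = fBDM S m a' ∧ gBDM S m a = gBDM S m a' :=
  subcl_compatible_BDM_general m S a a' ha ha' hrep
end

section
/- Let Q be a finite state set with start state q_0 ∈ Q, δ : Q × Σ → Q a transition function, and η : Q → ℕ an additive emission function; for x ∈ Σ^n define value(x) := Σ_{t=1}^{n} η(q_t), where q_t = δ(q_{t−1}, x_{t−1}) are the states entered while reading x from q_0. Let (C, c_0, Σ, φ) be a finite-memory text model, and define forward vectors u_t : Q × C × ℕ → ℝ by u_0(q,c,v) := 1 if (q,c,v) = (q_0,c_0,0) and 0 otherwise, and u_{t+1}(q',c',v') := Σ u_t(q,c,v)·φ(c,σ,c'), the sum being over all q ∈ Q, c ∈ C, v ∈ ℕ, σ ∈ Σ with δ(q,σ) = q' and v + η(q') = v'. Then for all n ≥ 0 and all v ∈ ℕ: Σ_{q ∈ Q, c ∈ C} u_n(q,c,v) = Σ_{x ∈ Σ^n with value(x) = v} P_M(x); i.e., the forward recursion computes the exact distribution of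 value on random texts generated by the model. -/
/-!
Unrolling the recursion, `u_n(q, c, v)` is the sum, over the texts `x` of length `n` that drive
the automaton from `q₀` to `q` with value `v`, of the probability of emitting `x` from context
`c₀` and ending in context `c`. That probability is the `(c₀, c)` entry of the product of the
matrices `(φ(·, σ, ·))` along `x`, and summing it over `c` gives `P_M(x)`.
-/

/-- `value(x)`: the sum of the emissions `η(q_t)` of the states `q_t = δ(q_{t−1}, x_{t−1})`
entered while reading `x` from state `q`. -/
def daaValue {A Q : Type*} (δ : Q → A → Q) (η : Q → ℕ) : Q → List A → ℕ
  | _, [] => 0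
  | q, σ :: x => η (δ q σ) + daaValue δ η (δ q σ) x

/-- `P_M(x)`: the probability that the finite-memory text model `(C, c₀, Σ, φ)` generates the
text `x = x_0…x_{n−1}`, namely `Σ_{c_1,…,c_n ∈ C} Π_{t=0}^{n−1} φ(c_t, x_t, c_{t+1})`. -/
noncomputable def textProb {A C : Type*} [Fintype C] (φ : C → A → C → ℝ) (c0 : C)
    {n : ℕ} (x : Fin n → A) : ℝ :=
  ∑ cs : Fin n → C, ∏ t : Fin n, φ ((Fin.cons c0 cs : Fin (n + 1) → C) t.castSucc) (x t) (cs t)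

/-- The forward vectors `u_t : Q × C × ℕ → ℝ`: `u_0(q,c,v) = 1` iff `(q,c,v) = (q₀,c₀,0)`,
and `u_{t+1}(q',c',v') = Σ u_t(q,c,v)·φ(c,σ,c')`, the sum being over all `q,c,v,σ` with
`δ(q,σ) = q'` and `v + η(q') = v'` (such a `v` exists iff `η(q') ≤ v'`, and then
`v = v' − η(q')`). -/
noncomputable def fwd {A Q C : Type*} [Fintype A] [Fintype Q] [Fintype C]
    [DecidableEq Q] [DecidableEq C]
    (δ : Q → A → Q) (η : Q → ℕ) (φ : C → A → C → ℝ) (q0 : Q) (c0 : C) :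
    ℕ → Q → C → ℕ → ℝ
  | 0 => fun q c v => if q = q0 ∧ c = c0 ∧ v = 0 then 1 else 0
  | t + 1 => fun q' c' v' =>
      ∑ q : Q, ∑ c : C, ∑ σ : A,
        if δ q σ = q' ∧ η q' ≤ v' then
          fwd δ η φ q0 c0 t q c (v' - η q') * φ c σ c'
        else 0

section
variable {A Q C : Type*}

theorem daaValue_append_singleton (δ : Q → A → Q) (η : Q → ℕ) (q : Q) (w : List A) (σ : A) :
    daaValue δ η q (w ++ [σ]) = daaValue δ η q w + η (δ (w.foldl δ q) σ) := by
  induction w generalizing q with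
  | nil => simp [daaValue]
  | cons a w ih => simp only [List.cons_append, daaValue, ih, List.foldl_cons]; omega

theorem Fin.sum_univ_fun_snoc {M : Type*} [AddCommMonoid M] [Fintype A] {n : ℕ}
    (f : (Fin (n + 1) → A) → M) :
    ∑ x, f x = ∑ y : Fin n → A, ∑ σ : A, f (Fin.snoc y σ) := by
  rw [← (Fin.snocEquiv fun _ => A).sum_comp, Fintype.sum_prod_type, Finset.sum_comm]
  rfl

theorem List.ofFn_snoc {n : ℕ} (y : Fin n → A) (σ : A) :
    List.ofFn (Fin.snoc y σ : Fin (n + 1) → A) = List.ofFn y ++ [σ] := by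
  rw [List.ofFn_succ']
  simp

variable [Fintype C]

theorem textProb_succ (φ : C → A → C → ℝ) (c0 : C) {n : ℕ} (x : Fin (n + 1) → A) :
    textProb φ c0 x = ∑ c, φ c0 (x 0) c * textProb φ c (Fin.tail x) := by
  rw [textProb, ← (Fin.consEquiv fun _ => C).sum_comp, Fintype.sum_prod_type]
  simp only [textProb, Finset.mul_sum]
  refine Finset.sum_congr rfl fun c _ => Finset.sum_congr rfl fun cs _ => ?_
  rw [Fin.prod_univ_succ]
  rfl

variable [DecidableEq C]

noncomputable def wordMatrix (φ : C → A → C → ℝ) (w : List A) : Matrix C C ℝ :=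
  (w.map fun σ => Matrix.of fun c c' => φ c σ c').prod

theorem wordMatrix_cons_apply (φ : C → A → C → ℝ) (σ : A) (w : List A) (c c' : C) :
    wordMatrix φ (σ :: w) c c' = ∑ m, φ c σ m * wordMatrix φ w m c' := by
  simp [wordMatrix, Matrix.mul_apply]

theorem wordMatrix_append_singleton_apply (φ : C → A → C → ℝ) (w : List A) (σ : A) (c c' : C) :
    wordMatrix φ (w ++ [σ]) c c' = ∑ m, wordMatrix φ w c m * φ m σ c' := by
  simp [wordMatrix, Matrix.mul_apply]

theorem textProb_eq_sum_wordMatrix (φ : C → A → C → ℝ) {n : ℕ} (c0 : C) (x : Fin n → A) :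
    textProb φ c0 x = ∑ c, wordMatrix φ (List.ofFn x) c0 c := by
  induction n generalizing c0 with
  | zero => simp [textProb, wordMatrix, Matrix.one_apply]
  | succ n ih =>
    simp only [textProb_succ, ih, List.ofFn_succ, wordMatrix_cons_apply, Finset.mul_sum]
    exact Finset.sum_comm

theorem fwd_eq_sum_wordMatrix [Fintype A] [Fintype Q] [DecidableEq Q]
    (δ : Q → A → Q) (η : Q → ℕ) (φ : C → A → C → ℝ) (q0 : Q) (c0 : C)
    (n : ℕ) (q : Q) (c : C) (v : ℕ) :
    fwd δ η φ q0 c0 n q c v = ∑ x : Fin n → A,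
      if (List.ofFn x).foldl δ q0 = q ∧ daaValue δ η q0 (List.ofFn x) = v
      then wordMatrix φ (List.ofFn x) c0 c else 0 := by
  induction n generalizing q c v with
  | zero =>
    simp only [fwd, Fintype.sum_unique, List.ofFn_zero, List.foldl_nil, daaValue, wordMatrix,
      List.map_nil, List.prod_nil, Matrix.one_apply]
    grind
  | succ n ih =>
    rw [Fin.sum_univ_fun_snoc]
    simp only [fwd, ih, Finset.sum_mul, ite_mul, zero_mul, Finset.ite_sum_zero, List.ofFn_snoc,
      List.foldl_append, List.foldl_cons, List.foldl_nil, daaValue_append_singleton,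
      wordMatrix_append_singleton_apply]
    simp_rw [Finset.sum_comm (α := Fin n → A)]
    refine Finset.sum_congr rfl fun y _ => ?_
    rw [Fintype.sum_eq_single (List.foldl δ q0 (List.ofFn y)), Finset.sum_comm]
    · refine Finset.sum_congr rfl fun σ _ => Finset.sum_congr rfl fun m _ => ?_
      -- thanks to the guard `η q ≤ v`, `value y = v - η q` means `value y + η q = v`: no truncation
      grind
    · intro p hp
      exact Finset.sum_eq_zero fun m _ => Finset.sum_eq_zero fun σ _ => by simp [Ne.symm hp]

end

theorem fwd_computes_value_distribution_general {A : Type*} [Fintype A]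
    {Q C : Type*} [Fintype Q] [DecidableEq Q] [Fintype C] [DecidableEq C]
    (δ : Q → A → Q) (η : Q → ℕ) (q0 : Q) (c0 : C)
    (φ : C → A → C → ℝ)
    (n : ℕ) (v : ℕ) :
    (∑ q : Q, ∑ c : C, fwd δ η φ q0 c0 n q c v)
      = ∑ x : Fin n → A,
          (if daaValue δ η q0 (List.ofFn x) = v then textProb φ c0 x else 0) := by
  simp only [fwd_eq_sum_wordMatrix, textProb_eq_sum_wordMatrix]
  simp_rw [Finset.sum_comm (α := Fin n → A)]
  refine Finset.sum_congr rfl fun x _ => ?_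
  simp [ite_and]

/-- The forward recursion computes the exact distribution of `value` on
random texts generated by a finite-memory text model: for all `n ≥ 0` and `v ∈ ℕ`,
`Σ_{q ∈ Q, c ∈ C} u_n(q,c,v) = Σ_{x ∈ Σ^n, value(x) = v} P_M(x)`. -/
theorem fwd_computes_value_distribution {A : Type*} [Fintype A] [DecidableEq A] [Nonempty A]
    {Q C : Type*} [Fintype Q] [DecidableEq Q] [Fintype C] [DecidableEq C]
    (δ : Q → A → Q) (η : Q → ℕ) (q0 : Q) (c0 : C)
    (φ : C → A → C → ℝ)
    (hφ0 : ∀ c σ c', 0 ≤ φ c σ c' ∧ φ c σ c' ≤ 1)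
    (hφ1 : ∀ c : C, (∑ σ : A, ∑ c' : C, φ c σ c') = 1)
    (n : ℕ) (v : ℕ) :
    (∑ q : Q, ∑ c : C, fwd δ η φ q0 c0 n q c v)
      = ∑ x : Fin n → A,
          (if daaValue δ η q0 (List.ofFn x) = v then textProb φ c0 x else 0) :=
  fwd_computes_value_distribution_general δ η q0 c0 φ n v
end
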